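/- arXiv:1806.07485 — 6 statements merged into one kernel-verified Lean document; each statement's English description precedes it below -/
import Mathlib

section
/- Let Q_L be a complex n×n matrix satisfying: (i) Q_L commutes with its entrywise conjugate Q̄_L, and (ii) Re(Q_L) and Im(Q_L) are diagonalizable with real eigenvalues. Define Q_B = Q_L·(I + (1/2)(I - Q̄_L·Q_L)). Then the spectral radius ρ(Q_B) ≤ 1 if and only if ρ(Q_L) ≤ 2. -/
/-!
Write `Q = X + i Y` with `X`, `Y` the real and imaginary parts of `Q`. Then `Q̄ = X - i Y`, and
`Q̄ Q - Q Q̄ = 2i (X Y - Y X)`, so `X` and `Y` commute, and so do `Q`, `Q̄` and `Q_B` with them.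
Hence every eigenvalue of `Q` or of `Q_B` is attained on a common eigenvector `v` of `X` and `Y`.
Diagonalizability over `ℝ` makes the eigenvalues `a`, `b` of `X`, `Y` on `v` real, so `Q v = λ v`
and `Q̄ v = λ̄ v` with `λ = a + i b`, whence `Q_B v = λ (1 + (1 - |λ|²) / 2) v`: the spectrum of
`Q_B` is the image of that of `Q` under this map. Finally, for `r = |λ|`, the bound
`r |3 - r²| ≤ 2` is equivalent to `r ≤ 2`, because `2 - r (3 - r²) = (r - 1)² (r + 2)` and
`2 + r (3 - r²) = (2 - r) (r + 1)²`.
-/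

open Matrix

/-- Real part of a complex matrix, entrywise. -/
def matRe {n : ℕ} (Q : Matrix (Fin n) (Fin n) ℂ) : Matrix (Fin n) (Fin n) ℝ :=
  fun i j => (Q i j).re

/-- Imaginary part of a complex matrix, entrywise. -/
def matIm {n : ℕ} (Q : Matrix (Fin n) (Fin n) ℂ) : Matrix (Fin n) (Fin n) ℝ :=
  fun i j => (Q i j).im

/-- Entrywise complex conjugate of a complex matrix. -/
def matConj {n : ℕ} (Q : Matrix (Fin n) (Fin n) ℂ) : Matrix (Fin n) (Fin n) ℂ :=
  Q.map (starRingEnd ℂ)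

/-- A real square matrix is diagonalizable (over ℝ, hence with real eigenvalues). -/
def IsDiagonalizableR {n : ℕ} (X : Matrix (Fin n) (Fin n) ℝ) : Prop :=
  ∃ P D : Matrix (Fin n) (Fin n) ℝ, IsUnit P.det ∧ D.IsDiag ∧ X = P * D * P⁻¹

namespace Module.End
variable {K V : Type*} [Field K] [IsAlgClosed K] [AddCommGroup V] [Module K V]
  [FiniteDimensional K V]

lemma exists_inf_eigenspace_ne_bot {p : Submodule K V} (hp : p ≠ ⊥) {f : End K V}
    (hf : Set.MapsTo f p p) : ∃ a, p ⊓ f.eigenspace a ≠ ⊥ := by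
  have : Nontrivial p := Submodule.nontrivial_iff_ne_bot.mpr hp
  obtain ⟨a, ha⟩ := exists_eigenvalue (f.restrict hf)
  obtain ⟨⟨v, hvp⟩, hv⟩ := ha.exists_hasEigenvector
  refine ⟨a, (Submodule.ne_bot_iff _).mpr ⟨v, ⟨hvp, mem_eigenspace_iff.mpr ?_⟩, ?_⟩⟩
  · exact congrArg Subtype.val hv.apply_eq_smul
  · simpa using hv.2

lemma HasEigenvalue.exists_common_eigenvector {f g h : End K V} (hfg : Commute f g)
    (hfh : Commute f h) (hgh : Commute g h) {μ : K} (hμ : f.HasEigenvalue μ) :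
    ∃ v ≠ 0, ∃ a b : K, f v = μ • v ∧ g v = a • v ∧ h v = b • v := by
  obtain ⟨a, ha⟩ := exists_inf_eigenspace_ne_bot hμ (mapsTo_genEigenspace_of_comm hfg μ 1)
  obtain ⟨b, hb⟩ := exists_inf_eigenspace_ne_bot ha
    ((mapsTo_genEigenspace_of_comm hfh μ 1).inter_inter (mapsTo_genEigenspace_of_comm hgh a 1))
  obtain ⟨v, ⟨⟨hvf, hvg⟩, hvh⟩, hv⟩ := (Submodule.ne_bot_iff _).mp hb
  exact ⟨v, hv, a, b, mem_eigenspace_iff.mp hvf, mem_eigenspace_iff.mp hvg,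
    mem_eigenspace_iff.mp hvh⟩

end Module.End

namespace Matrix
variable {ι K : Type*} [Fintype ι] [DecidableEq ι] [Field K]

lemma mem_spectrum_of_mulVec_eq_smul {M : Matrix ι ι K} {v : ι → K} (hv : v ≠ 0) {μ : K}
    (h : M *ᵥ v = μ • v) : μ ∈ spectrum K M := by
  rw [← spectrum_toLin', ← Module.End.hasEigenvalue_iff_mem_spectrum]
  exact Module.End.hasEigenvalue_of_hasEigenvector
    ⟨Module.End.mem_eigenspace_iff.mpr (by rwa [toLin'_apply]), hv⟩

lemma exists_common_mulVec_eq_smul [IsAlgClosed K] {M X Y : Matrix ι ι K} (hMX : Commute M X)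
    (hMY : Commute M Y) (hXY : Commute X Y) {μ : K} (hμ : μ ∈ spectrum K M) :
    ∃ v ≠ 0, ∃ a b : K, M *ᵥ v = μ • v ∧ X *ᵥ v = a • v ∧ Y *ᵥ v = b • v := by
  rw [← spectrum_toLin', ← Module.End.hasEigenvalue_iff_mem_spectrum] at hμ
  have hlin {A B : Matrix ι ι K} (h : Commute A B) : Commute A.toLin' B.toLin' :=
    h.map toLinAlgEquiv'
  simpa only [toLin'_apply] using hμ.exists_common_eigenvector (hlin hMX) (hlin hMY) (hlin hXY)

end Matrix

open Polynomial in
lemma IsDiagonalizableR.spectrum_map_ofReal_subset {n : ℕ} {A : Matrix (Fin n) (Fin n) ℝ}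
    (hA : IsDiagonalizableR A) :
    spectrum ℂ (A.map Complex.ofReal) ⊆ Set.range ((↑) : ℝ → ℂ) := by
  obtain ⟨P, D, hP, hD, rfl⟩ := hA
  intro μ hμ
  have hcharpoly : (P * D * P⁻¹).charpoly = ∏ i, (X - C (D.diag i)) := by
    rw [← charpoly_diagonal, hD.diagonal_diag]
    exact charpoly_units_conj ((isUnit_iff_isUnit_det P).mpr hP).unit D
  rw [Matrix.mem_spectrum_iff_isRoot_charpoly, show Complex.ofReal = ⇑Complex.ofRealHom from rfl,
    charpoly_map, hcharpoly] at hμ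
  simp only [diag_apply, Polynomial.map_prod, Polynomial.map_sub, map_X, map_C,
    Complex.ofRealHom_eq_coe, IsRoot.def, eval_prod, eval_sub, eval_X, eval_C,
    Finset.prod_eq_zero_iff, Finset.mem_univ, sub_eq_zero, true_and] at hμ
  obtain ⟨i, hi⟩ := hμ
  exact ⟨D.diag i, hi.symm⟩

open ComplexConjugate

lemma mul_abs_one_add_one_sub_sq_div_two_le_one_iff {r : ℝ} (hr : 0 ≤ r) :
    r * |1 + (1 - r ^ 2) / 2| ≤ 1 ↔ r ≤ 2 := by
  have hle : r * (1 + (1 - r ^ 2) / 2) ≤ 1 := by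
    nlinarith [mul_nonneg (sq_nonneg (r - 1)) (by linarith : 0 ≤ r + 2)]
  rw [show r * |1 + (1 - r ^ 2) / 2| = |r * (1 + (1 - r ^ 2) / 2)| by
    rw [abs_mul, abs_of_nonneg hr], abs_le]
  constructor
  · rintro ⟨hge, -⟩
    by_contra! h
    nlinarith [mul_pos (by linarith : 0 < r - 2) (by positivity : 0 < (r + 1) ^ 2)]
  · intro h
    exact ⟨by nlinarith [mul_nonneg (by linarith : 0 ≤ 2 - r) (sq_nonneg (r + 1))], hle⟩

noncomputable def bfeccSymbol (z : ℂ) : ℂ := z * (1 + (1 / 2) * (1 - conj z * z))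

lemma norm_bfeccSymbol_le_one_iff (z : ℂ) : ‖bfeccSymbol z‖ ≤ 1 ↔ ‖z‖ ≤ 2 := by
  have h : bfeccSymbol z = z * ((1 + (1 - ‖z‖ ^ 2) / 2 : ℝ) : ℂ) := by
    rw [bfeccSymbol, Complex.conj_mul']
    push_cast
    ring
  rw [h, norm_mul, Complex.norm_real, Real.norm_eq_abs]
  exact mul_abs_one_add_one_sub_sq_div_two_le_one_iff (norm_nonneg z)

lemma mulVec_bfecc_eq_smul {n : ℕ} {Q : Matrix (Fin n) (Fin n) ℂ} {v : Fin n → ℂ} {z : ℂ}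
    (hQ : Q *ᵥ v = z • v) (hQc : matConj Q *ᵥ v = conj z • v) :
    (Q * (1 + (1 / 2 : ℂ) • (1 - matConj Q * Q))) *ᵥ v = bfeccSymbol z • v := by
  have hinner : (1 + (1 / 2 : ℂ) • (1 - matConj Q * Q)) *ᵥ v
      = (1 + 1 / 2 * (1 - conj z * z)) • v := by
    rw [add_mulVec, one_mulVec, smul_mulVec, sub_mulVec, one_mulVec, ← mulVec_mulVec, hQ,
      mulVec_smul, hQc, smul_smul]
    module
  rw [← mulVec_mulVec, hinner, mulVec_smul, hQ, smul_smul, bfeccSymbol, mul_comm]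

lemma map_matRe_add_I_smul_map_matIm {n : ℕ} (Q : Matrix (Fin n) (Fin n) ℂ) :
    (matRe Q).map (↑) + Complex.I • (matIm Q).map (↑) = Q := by
  ext i j
  simp [matRe, matIm, Complex.ext_iff]

lemma matConj_eq_map_matRe_sub_I_smul_map_matIm {n : ℕ} (Q : Matrix (Fin n) (Fin n) ℂ) :
    matConj Q = (matRe Q).map (↑) - Complex.I • (matIm Q).map (↑) := by
  ext i j
  simp [matConj, matRe, matIm, Complex.ext_iff]

lemma commute_map_matRe_map_matIm {n : ℕ} {Q : Matrix (Fin n) (Fin n) ℂ}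
    (h : matConj Q * Q = Q * matConj Q) :
    Commute ((matRe Q).map ((↑) : ℝ → ℂ)) ((matIm Q).map (↑)) := by
  set X : Matrix (Fin n) (Fin n) ℂ := (matRe Q).map (↑)
  set Y : Matrix (Fin n) (Fin n) ℂ := (matIm Q).map (↑)
  have h2 : (2 * Complex.I) • (X * Y - Y * X) = matConj Q * Q - Q * matConj Q := by
    have hQ : Q = X + Complex.I • Y := (map_matRe_add_I_smul_map_matIm Q).symm
    have hQc : matConj Q = X - Complex.I • Y := matConj_eq_map_matRe_sub_I_smul_map_matIm Q
    rw [hQc, hQ]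
    simp only [sub_mul, mul_sub, add_mul, mul_add, Matrix.smul_mul, Matrix.mul_smul]
    module
  rw [h, sub_self, smul_eq_zero] at h2
  exact sub_eq_zero.mp (h2.resolve_left (by simp))

lemma exists_eigenvector_of_commute_matRe_matIm {n : ℕ} {Q M : Matrix (Fin n) (Fin n) ℂ}
    (hcomm : matConj Q * Q = Q * matConj Q)
    (hX : IsDiagonalizableR (matRe Q)) (hY : IsDiagonalizableR (matIm Q))
    (hMX : Commute M ((matRe Q).map (↑))) (hMY : Commute M ((matIm Q).map (↑)))
    {μ : ℂ} (hμ : μ ∈ spectrum ℂ M) :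
    ∃ v ≠ 0, ∃ z : ℂ, M *ᵥ v = μ • v ∧ Q *ᵥ v = z • v ∧ matConj Q *ᵥ v = conj z • v := by
  obtain ⟨v, hv, a, b, hMv, hXv, hYv⟩ :=
    exists_common_mulVec_eq_smul hMX hMY (commute_map_matRe_map_matIm hcomm) hμ
  obtain ⟨a, rfl⟩ := hX.spectrum_map_ofReal_subset (mem_spectrum_of_mulVec_eq_smul hv hXv)
  obtain ⟨b, rfl⟩ := hY.spectrum_map_ofReal_subset (mem_spectrum_of_mulVec_eq_smul hv hYv)
  refine ⟨v, hv, a + Complex.I * b, hMv, ?_, ?_⟩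
  · rw [← map_matRe_add_I_smul_map_matIm Q, add_mulVec, smul_mulVec, hXv, hYv, smul_smul,
      ← add_smul]
  · rw [matConj_eq_map_matRe_sub_I_smul_map_matIm, sub_mulVec, smul_mulVec, hXv, hYv, smul_smul,
      ← sub_smul]
    simp [sub_eq_add_neg]

theorem spectrum_bfecc {n : ℕ} {Q : Matrix (Fin n) (Fin n) ℂ}
    (hcomm : matConj Q * Q = Q * matConj Q)
    (hX : IsDiagonalizableR (matRe Q)) (hY : IsDiagonalizableR (matIm Q)) :
    spectrum ℂ (Q * (1 + (1 / 2 : ℂ) • (1 - matConj Q * Q))) = bfeccSymbol '' spectrum ℂ Q := by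
  set X : Matrix (Fin n) (Fin n) ℂ := (matRe Q).map (↑)
  set Y : Matrix (Fin n) (Fin n) ℂ := (matIm Q).map (↑)
  have hQ : Q = X + Complex.I • Y := (map_matRe_add_I_smul_map_matIm Q).symm
  have hQc : matConj Q = X - Complex.I • Y := matConj_eq_map_matRe_sub_I_smul_map_matIm Q
  have hXY : Commute X Y := commute_map_matRe_map_matIm hcomm
  have hQX : Commute Q X := hQ ▸ (Commute.refl X).add_left (hXY.symm.smul_left _)
  have hQY : Commute Q Y := hQ ▸ hXY.add_left ((Commute.refl Y).smul_left _)
  have hBcomm : ∀ W, Commute Q W → Commute (matConj Q) W →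
      Commute (Q * (1 + (1 / 2 : ℂ) • (1 - matConj Q * Q))) W := fun W hW hcW =>
    hW.mul_left ((Commute.one_left W).add_left
      (((Commute.one_left W).sub_left (hcW.mul_left hW)).smul_left _))
  have hBX := hBcomm X hQX (hQc ▸ (Commute.refl X).sub_left (hXY.symm.smul_left _))
  have hBY := hBcomm Y hQY (hQc ▸ hXY.sub_left ((Commute.refl Y).smul_left _))
  ext μ
  constructor
  · intro hμ
    obtain ⟨v, hv, z, hBv, hQv, hQcv⟩ :=
      exists_eigenvector_of_commute_matRe_matIm hcomm hX hY hBX hBY hμ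
    refine ⟨z, mem_spectrum_of_mulVec_eq_smul hv hQv, smul_left_injective ℂ hv ?_⟩
    exact (mulVec_bfecc_eq_smul hQv hQcv).symm.trans hBv
  · rintro ⟨z, hz, rfl⟩
    obtain ⟨v, hv, z', hQv', hQv, hQcv⟩ :=
      exists_eigenvector_of_commute_matRe_matIm hcomm hX hY hQX hQY hz
    obtain rfl : z = z' := smul_left_injective ℂ hv (hQv'.symm.trans hQv)
    exact mem_spectrum_of_mulVec_eq_smul hv (mulVec_bfecc_eq_smul hQv hQcv)

theorem stmt_3 {n : ℕ} (QL : Matrix (Fin n) (Fin n) ℂ)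
    (hcomm : matConj QL * QL = QL * matConj QL)
    (hX : IsDiagonalizableR (matRe QL)) (hY : IsDiagonalizableR (matIm QL))
    (QB : Matrix (Fin n) (Fin n) ℂ)
    (hQB : QB = QL * (1 + (1 / 2 : ℂ) • (1 - matConj QL * QL))) :
    (∀ μ ∈ spectrum ℂ QB, ‖μ‖ ≤ 1) ↔ (∀ μ ∈ spectrum ℂ QL, ‖μ‖ ≤ 2) := by
  rw [hQB, spectrum_bfecc hcomm hX hY, Set.forall_mem_image]
  exact forall₂_congr fun z _ => norm_bfeccSymbol_le_one_iff z
end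

section
/- For λ > 0, the following are equivalent: (a) for every θ ∈ ℝ, (1 - (λ² sin²θ)/2)²·(1 + λ² sin²θ) ≤ 1; (b) λ ≤ √3. -/
theorem stmt_6 (lam : ℝ) (hlam : 0 < lam) :
    (∀ θ : ℝ,
        (1 - lam ^ 2 * Real.sin θ ^ 2 / 2) ^ 2 * (1 + lam ^ 2 * Real.sin θ ^ 2) ≤ 1) ↔
      lam ≤ Real.sqrt 3 := by
  constructor
  · intro h
    have h1 := h (Real.pi / 2)
    rw [Real.sin_pi_div_two] at h1
    have hsq : lam ^ 2 ≤ 3 := by nlinarith [sq_nonneg lam, sq_nonneg (lam ^ 2)]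
    have := Real.sqrt_le_sqrt hsq
    rwa [Real.sqrt_sq hlam.le] at this
  · intro h θ
    have hsq : lam ^ 2 ≤ 3 := by
      have := Real.sq_sqrt (by norm_num : (3:ℝ) ≥ 0)
      nlinarith [Real.sqrt_nonneg 3]
    have hs1 : Real.sin θ ^ 2 ≤ 1 := Real.sin_sq_le_one θ
    have hs0 : 0 ≤ Real.sin θ ^ 2 := sq_nonneg _
    have hs3 : lam ^ 2 * Real.sin θ ^ 2 ≤ 3 := by nlinarith [sq_nonneg lam]
    have hsn : 0 ≤ lam ^ 2 * Real.sin θ ^ 2 := mul_nonneg (sq_nonneg lam) hs0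
    nlinarith [mul_nonneg (sq_nonneg (lam ^ 2 * Real.sin θ ^ 2)) (by linarith : (0:ℝ) ≤ 3 - lam ^ 2 * Real.sin θ ^ 2)]
end

section
/- Define f(ζ, θ) = (1 - (λ_x²ζ + λ_y²θ)/2)²·(1 + λ_x²ζ + λ_y²θ) on [0,1]². If λ_x² + λ_y² > 2 then max f over [0,1]² equals max(f(0,0), f(1,1)), and f(1,1) ≤ 1 if and only if λ_x² + λ_y² ≤ 3. -/
lemma key_aux (s S : ℝ) (hs0 : 0 ≤ s) (hsS : s ≤ S) :
    (1 - s / 2) ^ 2 * (1 + s) ≤ max 1 ((1 - S / 2) ^ 2 * (1 + S)) := by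
  rcases le_or_gt s 3 with h3 | h3
  · apply le_max_of_le_left
    nlinarith [mul_nonneg (mul_nonneg hs0 hs0) (sub_nonneg.2 h3)]
  · apply le_max_of_le_right
    have hS3 : (3:ℝ) ≤ S := le_trans h3.le hsS
    nlinarith [mul_nonneg (sub_nonneg.2 hsS) (mul_nonneg (by linarith : (0:ℝ) ≤ S) (by linarith : (0:ℝ) ≤ S - 3)),
      mul_nonneg (sub_nonneg.2 hsS) (mul_nonneg hs0 (by linarith : (0:ℝ) ≤ s - 3)),
      mul_nonneg (sub_nonneg.2 hsS) (mul_nonneg (by linarith : (0:ℝ) ≤ S) hs0)]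

theorem stmt_10 (lx ly : ℝ) (hlx : 0 < lx) (hly : 0 < ly)
    (f : ℝ × ℝ → ℝ)
    (hf : ∀ p : ℝ × ℝ, f p =
      (1 - (lx ^ 2 * p.1 + ly ^ 2 * p.2) / 2) ^ 2 * (1 + lx ^ 2 * p.1 + ly ^ 2 * p.2))
    (hgt : lx ^ 2 + ly ^ 2 > 2) :
    IsGreatest (f '' (Set.Icc (0 : ℝ) 1 ×ˢ Set.Icc (0 : ℝ) 1)) (max (f (0, 0)) (f (1, 1))) ∧
    (f (1, 1) ≤ 1 ↔ lx ^ 2 + ly ^ 2 ≤ 3) := by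
  have h00 : ((0 : ℝ), (0 : ℝ)) ∈ Set.Icc (0 : ℝ) 1 ×ˢ Set.Icc (0 : ℝ) 1 := by
    constructor <;> constructor <;> norm_num
  have h11 : ((1 : ℝ), (1 : ℝ)) ∈ Set.Icc (0 : ℝ) 1 ×ˢ Set.Icc (0 : ℝ) 1 := by
    constructor <;> constructor <;> norm_num
  have hf00 : f (0, 0) = 1 := by rw [hf]; norm_num
  have hf11 : f (1, 1) = (1 - (lx ^ 2 + ly ^ 2) / 2) ^ 2 * (1 + (lx ^ 2 + ly ^ 2)) := by
    rw [hf]; ring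
  refine ⟨⟨?_, ?_⟩, ?_⟩
  · rcases max_cases (f (0, 0)) (f (1, 1)) with ⟨h, _⟩ | ⟨h, _⟩ <;> rw [h]
    · exact ⟨_, h00, rfl⟩
    · exact ⟨_, h11, rfl⟩
  · rintro y ⟨⟨ζ, θ⟩, ⟨⟨hζ0, hζ1⟩, ⟨hθ0, hθ1⟩⟩, rfl⟩
    simp only at hζ0 hζ1 hθ0 hθ1
    have h := key_aux (lx ^ 2 * ζ + ly ^ 2 * θ) (lx ^ 2 + ly ^ 2)
      (by positivity) (by nlinarith [sq_nonneg lx, sq_nonneg ly])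
    rw [hf, hf00, hf11]
    simp only
    calc (1 - (lx ^ 2 * ζ + ly ^ 2 * θ) / 2) ^ 2 * (1 + lx ^ 2 * ζ + ly ^ 2 * θ)
        = (1 - (lx ^ 2 * ζ + ly ^ 2 * θ) / 2) ^ 2 * (1 + (lx ^ 2 * ζ + ly ^ 2 * θ)) := by ring
      _ ≤ _ := h
  · rw [hf11]
    constructor
    · intro h
      nlinarith [sq_nonneg (lx ^ 2 + ly ^ 2)]
    · intro h
      nlinarith [sq_nonneg (lx ^ 2 + ly ^ 2)]
end

section
/- For λ_x, λ_y > 0 with max(λ_x, λ_y) ≤ √(7/2) and λ_x² + λ_y² ≤ 4, and for all θ, φ ∈ ℝ: (1/4)(cos θ + cos φ)² + λ_x² sin²θ + λ_y² sin²φ ≤ 4. -/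
private lemma aux1 (l s c : ℝ) (hs : s ^ 2 + c ^ 2 = 1) (h : 1/2 ≤ l ^ 2) :
    l ^ 2 * s ^ 2 + c ^ 2 / 2 ≤ l ^ 2 := by
  nlinarith [mul_nonneg (sq_nonneg c) (sub_nonneg.2 h)]

private lemma aux2 (l s c : ℝ) (hs : s ^ 2 + c ^ 2 = 1) (h : l ^ 2 < 1/2) :
    l ^ 2 * s ^ 2 + c ^ 2 / 2 ≤ 1/2 := by
  nlinarith [mul_nonneg (sq_nonneg s) (sub_nonneg.2 h.le)]

theorem stmt_11 (lx ly : ℝ) (hlx : 0 < lx) (hly : 0 < ly)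
    (hmax : max lx ly ≤ Real.sqrt (7 / 2)) (hsum : lx ^ 2 + ly ^ 2 ≤ 4) :
    ∀ θ φ : ℝ,
      (1 / 4) * (Real.cos θ + Real.cos φ) ^ 2 +
          lx ^ 2 * Real.sin θ ^ 2 + ly ^ 2 * Real.sin φ ^ 2 ≤ 4 := by
  intro θ φ
  have hx2 : lx ^ 2 ≤ 7 / 2 := by
    have h1 : lx ≤ Real.sqrt (7 / 2) := le_trans (le_max_left _ _) hmax
    nlinarith [Real.sq_sqrt (by norm_num : (7:ℝ)/2 ≥ 0), Real.sqrt_nonneg ((7:ℝ)/2)]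
  have hy2 : ly ^ 2 ≤ 7 / 2 := by
    have h1 : ly ≤ Real.sqrt (7 / 2) := le_trans (le_max_right _ _) hmax
    nlinarith [Real.sq_sqrt (by norm_num : (7:ℝ)/2 ≥ 0), Real.sqrt_nonneg ((7:ℝ)/2)]
  have s1 := Real.sin_sq_add_cos_sq θ
  have s2 := Real.sin_sq_add_cos_sq φ
  have key : (1 / 4) * (Real.cos θ + Real.cos φ) ^ 2 ≤
      Real.cos θ ^ 2 / 2 + Real.cos φ ^ 2 / 2 := by
    nlinarith [sq_nonneg (Real.cos θ - Real.cos φ)]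
  rcases le_or_gt (1/2 : ℝ) (lx ^ 2) with h1 | h1 <;>
    rcases le_or_gt (1/2 : ℝ) (ly ^ 2) with h2 | h2
  · have a1 := aux1 lx (Real.sin θ) (Real.cos θ) s1 h1
    have a2 := aux1 ly (Real.sin φ) (Real.cos φ) s2 h2
    linarith
  · have a1 := aux1 lx (Real.sin θ) (Real.cos θ) s1 h1
    have a2 := aux2 ly (Real.sin φ) (Real.cos φ) s2 h2
    linarith
  · have a1 := aux2 lx (Real.sin θ) (Real.cos θ) s1 h1
    have a2 := aux1 ly (Real.sin φ) (Real.cos φ) s2 h2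
    linarith
  · have a1 := aux2 lx (Real.sin θ) (Real.cos θ) s1 h1
    have a2 := aux2 ly (Real.sin φ) (Real.cos φ) s2 h2
    linarith
end

section
/- In the least squares fitting above, if the center point is (x⁰,y⁰) = (0,0) (so the first row of A is (1,0,0)), then the fitted value at the center satisfies |â - a| ≤ ‖A(θ̂ - θ)‖ ≤ ‖F‖ ≤ C√(K+1)·h², i.e. the least-square field value approximation is second order accurate. -/
open Matrix

/-- Euclidean norm of a finite real vector. -/
noncomputable def euclNorm {m : Type*} [Fintype m] (v : m → ℝ) : ℝ :=
  Real.sqrt (∑ i, v i ^ 2)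

lemma sum_sq_eq_dot {m : Type*} [Fintype m] (v : m → ℝ) :
    ∑ i, v i ^ 2 = v ⬝ᵥ v := by
  simp [dotProduct, sq]

theorem stmt_15 (K : ℕ) (A : Matrix (Fin (K + 1)) (Fin 3) ℝ)
    (hrank : Function.Injective A.mulVec)
    (hrow0 : A 0 = ![1, 0, 0])
    (C h : ℝ) (hC : 0 ≤ C) (hh : 0 < h)
    (F : Fin (K + 1) → ℝ) (hF : ∀ i, |F i| ≤ C * h ^ 2)
    (e : Fin 3 → ℝ) (he : e = ((Aᵀ * A)⁻¹ * Aᵀ).mulVec F) :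
    |e 0| ≤ euclNorm (A.mulVec e) ∧
    euclNorm (A.mulVec e) ≤ euclNorm F ∧
    euclNorm F ≤ C * Real.sqrt (K + 1) * h ^ 2 := by
  -- AᵀA is invertible
  have hinj : Function.Injective (Aᵀ * A).mulVec := by
    intro x y hxy
    have hsub : (Aᵀ * A).mulVec (x - y) = 0 := by
      rw [Matrix.mulVec_sub, hxy, sub_self]
    have hdot : (A.mulVec (x - y)) ⬝ᵥ (A.mulVec (x - y)) = 0 := by
      have : (x - y) ⬝ᵥ (Aᵀ * A).mulVec (x - y) = 0 := by rw [hsub, dotProduct_zero]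
      rw [← Matrix.mulVec_mulVec, Matrix.dotProduct_mulVec,
        Matrix.vecMul_transpose] at this
      exact this
    have hAz : A.mulVec (x - y) = 0 := by
      funext i
      have hnn : ∀ j ∈ Finset.univ, 0 ≤ (A.mulVec (x - y) j) * (A.mulVec (x - y) j) :=
        fun j _ => mul_self_nonneg _
      have := (Finset.sum_eq_zero_iff_of_nonneg hnn).mp hdot i (Finset.mem_univ i)
      exact mul_self_eq_zero.mp this
    have : A.mulVec (x - y) = A.mulVec 0 := by rw [hAz, Matrix.mulVec_zero]
    have := hrank this
    exact sub_eq_zero.mp this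
  have hU : IsUnit (Aᵀ * A) := Matrix.mulVec_injective_iff_isUnit.mp hinj
  have hUdet : IsUnit (Aᵀ * A).det := (Matrix.isUnit_iff_isUnit_det _).mp hU
  have hinvmul : (Aᵀ * A)⁻¹ * (Aᵀ * A) = 1 := Matrix.nonsing_inv_mul _ hUdet
  set P : Matrix (Fin (K + 1)) (Fin (K + 1)) ℝ := A * ((Aᵀ * A)⁻¹ * Aᵀ) with hP
  have hAe : A.mulVec e = P.mulVec F := by
    rw [he, Matrix.mulVec_mulVec]
  have hPt : Pᵀ = P := by
    have hsymm : (Aᵀ * A)ᵀ = Aᵀ * A := by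
      rw [Matrix.transpose_mul, Matrix.transpose_transpose]
    rw [hP, Matrix.transpose_mul, Matrix.transpose_mul, Matrix.transpose_transpose,
      Matrix.transpose_nonsing_inv, hsymm, Matrix.mul_assoc]
  have hPP : P * P = P := by
    rw [hP]
    calc A * ((Aᵀ * A)⁻¹ * Aᵀ) * (A * ((Aᵀ * A)⁻¹ * Aᵀ))
        = A * ((Aᵀ * A)⁻¹ * ((Aᵀ * A) * ((Aᵀ * A)⁻¹ * Aᵀ))) := by
          simp only [Matrix.mul_assoc]
      _ = A * ((Aᵀ * A)⁻¹ * Aᵀ) := by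
          rw [← Matrix.mul_assoc ((Aᵀ * A)⁻¹), hinvmul, Matrix.one_mul]
  -- the middle inequality
  set w : Fin (K + 1) → ℝ := P.mulVec F with hw
  set u : Fin (K + 1) → ℝ := F - w with huu
  have hPu : u ᵥ* P = 0 := by
    have : P.mulVec u = 0 := by
      rw [huu, Matrix.mulVec_sub, hw, Matrix.mulVec_mulVec, hPP, sub_self]
    rw [← Matrix.mulVec_transpose, hPt, this]
  have hou : u ⬝ᵥ w = 0 := by
    rw [hw, Matrix.dotProduct_mulVec, hPu, zero_dotProduct]
  have how : w ⬝ᵥ u = 0 := by rw [dotProduct_comm, hou]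
  have hkey : ∑ i, w i ^ 2 ≤ ∑ i, F i ^ 2 := by
    have hFwu : F = w + u := by rw [huu]; ring
    have : F ⬝ᵥ F = w ⬝ᵥ w + u ⬝ᵥ u := by
      rw [hFwu, add_dotProduct, dotProduct_add, dotProduct_add,
        hou, how]
      ring
    rw [sum_sq_eq_dot, sum_sq_eq_dot, this]
    have : 0 ≤ u ⬝ᵥ u := by
      rw [← sum_sq_eq_dot]
      exact Finset.sum_nonneg fun i _ => sq_nonneg _
    linarith
  have hmid : euclNorm (A.mulVec e) ≤ euclNorm F := by
    rw [hAe]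
    exact Real.sqrt_le_sqrt hkey
  -- first inequality
  have hAe0 : (A.mulVec e) 0 = e 0 := by
    simp [Matrix.mulVec, hrow0, dotProduct, Fin.sum_univ_three]
  have h1 : |e 0| ≤ euclNorm (A.mulVec e) := by
    rw [← hAe0, ← Real.sqrt_sq_eq_abs]
    apply Real.sqrt_le_sqrt
    exact Finset.single_le_sum (fun i _ => sq_nonneg ((A.mulVec e) i)) (Finset.mem_univ 0)
  -- third inequality
  have h3 : euclNorm F ≤ C * Real.sqrt (K + 1) * h ^ 2 := by
    have hb : ∑ i, F i ^ 2 ≤ (K + 1) * (C * h ^ 2) ^ 2 := by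
      calc ∑ i, F i ^ 2 ≤ ∑ _i : Fin (K + 1), (C * h ^ 2) ^ 2 := by
            apply Finset.sum_le_sum
            intro i _
            have := hF i
            calc F i ^ 2 = |F i| ^ 2 := (sq_abs _).symm
              _ ≤ (C * h ^ 2) ^ 2 := by
                  apply pow_le_pow_left₀ (abs_nonneg _) this
        _ = (K + 1) * (C * h ^ 2) ^ 2 := by
            simp [Finset.sum_const]
    have hCh : 0 ≤ C * h ^ 2 := mul_nonneg hC (sq_nonneg h)
    calc euclNorm F ≤ Real.sqrt ((K + 1) * (C * h ^ 2) ^ 2) := Real.sqrt_le_sqrt hb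
      _ = Real.sqrt (K + 1) * (C * h ^ 2) := by
          rw [Real.sqrt_mul (by positivity), Real.sqrt_sq hCh]
      _ = C * Real.sqrt (K + 1) * h ^ 2 := by ring
  exact ⟨h1, hmid, h3⟩
end

section
/- For all λ > 0 with λ ≤ 2 and all θ ∈ ℝ, let ζ = √(cos²θ + λ² sin²θ) be the modulus of the Lax-Friedrichs eigenvalue; then ζ ≤ 2, and hence the BFECC amplification ((3 - ζ²)/2)·ζ has absolute value at most 1. -/
theorem stmt_19 (lam : ℝ) (hpos : 0 < lam) (hlam : lam ≤ 2) (θ : ℝ) :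
    (Real.cos θ ^ 2 + lam ^ 2 * Real.sin θ ^ 2) *
        (1 + (1 - (Real.cos θ ^ 2 + lam ^ 2 * Real.sin θ ^ 2)) / 2) ^ 2 ≤ 1 ∧
    Real.sqrt (Real.cos θ ^ 2 + lam ^ 2 * Real.sin θ ^ 2) ≤ 2 ∧
    |((3 - (Real.sqrt (Real.cos θ ^ 2 + lam ^ 2 * Real.sin θ ^ 2)) ^ 2) / 2) *
        Real.sqrt (Real.cos θ ^ 2 + lam ^ 2 * Real.sin θ ^ 2)| ≤ 1 := by
  set s := Real.cos θ ^ 2 + lam ^ 2 * Real.sin θ ^ 2 with hs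
  clear_value s
  have hpyth := Real.sin_sq_add_cos_sq θ
  have hsin : Real.sin θ ^ 2 ≥ 0 := sq_nonneg _
  have hcos : Real.cos θ ^ 2 ≥ 0 := sq_nonneg _
  have hs0 : 0 ≤ s := by rw [hs]; positivity
  have hl4 : lam ^ 2 ≤ 4 := by nlinarith
  have hs4 : s ≤ 4 := by nlinarith [mul_nonneg (by linarith : (0:ℝ) ≤ 4 - lam ^ 2) hsin]
  have ht0 : 0 ≤ Real.sqrt s := Real.sqrt_nonneg s
  have ht2 : Real.sqrt s ^ 2 = s := Real.sq_sqrt hs0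
  have hle : Real.sqrt s ≤ 2 := by
    nlinarith [ht2, ht0]
  refine ⟨by nlinarith [mul_nonneg (sq_nonneg (s - 1)) (by linarith : (0:ℝ) ≤ 4 - s)], hle, ?_⟩
  rw [abs_le]
  constructor <;> nlinarith [sq_nonneg (Real.sqrt s - 1), sq_nonneg (Real.sqrt s + 1), ht2, ht0, hle, sq_nonneg (Real.sqrt s ^ 2 - 1)]
end
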